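/- Let w_*(x) = (√2/2)/(e^{x/4} + e^{-x/4}). Then lim_{t→∞} e^{t/4} · ∫_ℝ w_*(x + t)·w_*(x)³ dx = 1/4. -/

import Mathlib

/-! Since `exp (t / 4) * wstar (x + t) = (√2 / 2) / (exp (x / 4) + exp (-(x / 4) - t / 2))` increases
to `wstarTail x = (√2 / 2) * exp (-(x / 4))` as `t → ∞`, dominated convergence reduces the limit to
`∫ wstarTail * wstar ^ 3`. With `u = exp (x / 2)` this integrand is `u / (4 (1 + u) ^ 3)`, the
`x`-derivative of `(1 - (1 + u)⁻²) / 4`, which increases from `0` at `-∞` to `1 / 4` at `+∞`. -/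

open Real MeasureTheory Filter

noncomputable def wstar (x : ℝ) : ℝ :=
  (Real.sqrt 2 / 2) / (Real.exp (x / 4) + Real.exp (-(x / 4)))

open scoped Topology

theorem integrable_deriv_of_nonneg_of_tendsto {g g' : ℝ → ℝ} {m n : ℝ}
    (hderiv : ∀ x, HasDerivAt g (g' x) x) (hpos : ∀ x, 0 ≤ g' x)
    (hbot : Tendsto g atBot (𝓝 m)) (htop : Tendsto g atTop (𝓝 n)) : Integrable g' := by
  have hmono : Monotone g := monotone_of_hasDerivAt_nonneg hderiv hpos
  have hint (a b : ℝ) : IntervalIntegrable g' volume a b :=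
    intervalIntegral.intervalIntegrable_deriv_of_nonneg
      (fun x _ ↦ (hderiv x).continuousAt.continuousWithinAt) (fun x _ ↦ hderiv x)
      (fun x _ ↦ hpos x)
  refine integrable_of_intervalIntegral_norm_bounded (n - m) (fun i ↦ (hint (-i) i).1)
    tendsto_neg_atTop_atBot tendsto_id (Eventually.of_forall fun i ↦ ?_)
  calc ∫ x in -i..id i, ‖g' x‖
      = ∫ x in -i..i, g' x := by simp only [id, Real.norm_of_nonneg (hpos _)]
    _ = g i - g (-i) :=
      intervalIntegral.integral_eq_sub_of_hasDerivAt (fun x _ ↦ hderiv x) (hint _ _)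
    _ ≤ n - m := sub_le_sub (hmono.ge_of_tendsto htop i) (hmono.le_of_tendsto hbot (-i))

theorem wstar_pos (x : ℝ) : 0 < wstar x := by
  unfold wstar; positivity

@[fun_prop]
theorem continuous_wstar : Continuous wstar :=
  continuous_const.div (by fun_prop) fun x ↦ (add_pos (exp_pos _) (exp_pos _)).ne'

noncomputable def wstarTail (x : ℝ) : ℝ := √2 / 2 * exp (-(x / 4))

theorem exp_mul_wstar_add (t x : ℝ) :
    exp (t / 4) * wstar (x + t) = √2 / 2 / (exp (x / 4) + exp (-(x / 4) - t / 2)) := by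
  have hden : exp ((x + t) / 4) + exp (-((x + t) / 4))
      = (exp (x / 4) + exp (-(x / 4) - t / 2)) * exp (t / 4) := by
    rw [add_mul, ← exp_add, ← exp_add]; ring_nf
  rw [wstar, hden, mul_div_assoc', mul_comm, mul_div_mul_right _ _ (exp_pos _).ne']

theorem exp_mul_wstar_add_le (t x : ℝ) : exp (t / 4) * wstar (x + t) ≤ wstarTail x := by
  rw [exp_mul_wstar_add, wstarTail, exp_neg, ← div_eq_mul_inv]
  exact div_le_div_of_nonneg_left (by positivity) (exp_pos _) (le_add_of_nonneg_right (exp_pos _).le)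

theorem tendsto_exp_mul_wstar_add (x : ℝ) :
    Tendsto (fun t ↦ exp (t / 4) * wstar (x + t)) atTop (𝓝 (wstarTail x)) := by
  have hsmall : Tendsto (fun t : ℝ ↦ exp (-(x / 4) - t / 2)) atTop (𝓝 0) :=
    tendsto_exp_atBot.comp <| tendsto_atBot_add_const_left _ _ <|
      tendsto_neg_atTop_atBot.comp (tendsto_id.atTop_div_const two_pos) |>.congr fun t ↦ by simp
  have hlim : Tendsto (fun t ↦ √2 / 2 / (exp (x / 4) + exp (-(x / 4) - t / 2))) atTop
      (𝓝 (√2 / 2 / (exp (x / 4) + 0))) :=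
    tendsto_const_nhds.div (tendsto_const_nhds.add hsmall) (by positivity)
  rw [add_zero] at hlim
  rw [wstarTail, exp_neg, ← div_eq_mul_inv]
  simpa only [exp_mul_wstar_add] using hlim

noncomputable def wstarInteractionPrimitive (x : ℝ) : ℝ := (1 - ((1 + exp (x / 2)) ^ 2)⁻¹) / 4

theorem hasDerivAt_wstarInteractionPrimitive (x : ℝ) :
    HasDerivAt wstarInteractionPrimitive (exp (x / 2) / (4 * (1 + exp (x / 2)) ^ 3)) x := by
  have hpos : 0 < 1 + exp (x / 2) := by positivity
  have h := (((hasDerivAt_id x).div_const 2).exp.const_add 1).pow 2 |>.inv (pow_pos hpos 2).ne'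
    |>.const_sub 1 |>.div_const 4
  refine h.congr_deriv ?_
  simp only [id, Pi.pow_apply]
  field_simp
  ring

theorem tendsto_wstarInteractionPrimitive_atBot :
    Tendsto wstarInteractionPrimitive atBot (𝓝 0) := by
  have h : Tendsto (fun x : ℝ ↦ exp (x / 2)) atBot (𝓝 0) :=
    tendsto_exp_atBot.comp (tendsto_id.atBot_div_const two_pos)
  have h2 : Tendsto (fun x : ℝ ↦ (1 + exp (x / 2)) ^ 2) atBot (𝓝 ((1 + 0) ^ 2)) :=
    (tendsto_const_nhds.add h).pow 2
  unfold wstarInteractionPrimitive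
  simpa using h2.inv₀ (by norm_num) |>.const_sub 1 |>.div_const 4

theorem tendsto_wstarInteractionPrimitive_atTop :
    Tendsto wstarInteractionPrimitive atTop (𝓝 (1 / 4)) := by
  have h : Tendsto (fun x : ℝ ↦ (1 + exp (x / 2)) ^ 2) atTop atTop :=
    (tendsto_pow_atTop two_ne_zero).comp <| tendsto_atTop_add_const_left _ 1 <|
      tendsto_exp_atTop.comp (tendsto_id.atTop_div_const two_pos)
  unfold wstarInteractionPrimitive
  simpa using (tendsto_inv_atTop_zero.comp h).const_sub 1 |>.div_const 4

theorem exp_half_eq_sq (x : ℝ) : exp (x / 2) = exp (x / 4) ^ 2 := by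
  rw [sq, ← exp_add]; ring_nf

theorem wstar_eq (x : ℝ) : wstar x = √2 / 2 * exp (x / 4) / (1 + exp (x / 2)) := by
  rw [wstar, exp_neg, exp_half_eq_sq]
  field_simp
  ring

theorem wstarTail_mul_wstar_pow_three (x : ℝ) :
    wstarTail x * wstar x ^ 3 = exp (x / 2) / (4 * (1 + exp (x / 2)) ^ 3) := by
  have hsqrt : √2 ^ 4 = 4 := by
    rw [show 4 = 2 * 2 by rfl, pow_mul, sq_sqrt zero_le_two]; norm_num
  rw [wstarTail, wstar_eq, exp_neg, exp_half_eq_sq]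
  field_simp
  linear_combination 4 * hsqrt

theorem integrable_wstarTail_mul_wstar_pow_three :
    Integrable fun x ↦ wstarTail x * wstar x ^ 3 := by
  simp_rw [wstarTail_mul_wstar_pow_three]
  exact integrable_deriv_of_nonneg_of_tendsto hasDerivAt_wstarInteractionPrimitive
    (fun x ↦ by positivity) tendsto_wstarInteractionPrimitive_atBot
    tendsto_wstarInteractionPrimitive_atTop

theorem integral_wstarTail_mul_wstar_pow_three :
    ∫ x, wstarTail x * wstar x ^ 3 = 1 / 4 := by
  rw [integral_of_hasDerivAt_of_tendsto ?_ integrable_wstarTail_mul_wstar_pow_three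
    tendsto_wstarInteractionPrimitive_atBot tendsto_wstarInteractionPrimitive_atTop, sub_zero]
  simpa only [← wstarTail_mul_wstar_pow_three] using hasDerivAt_wstarInteractionPrimitive

theorem stmt15 :
    Tendsto (fun t : ℝ => Real.exp (t / 4) * ∫ x : ℝ, wstar (x + t) * (wstar x) ^ 3)
      atTop (nhds (1 / 4)) := by
  have hlim : Tendsto (fun t ↦ ∫ x, exp (t / 4) * wstar (x + t) * wstar x ^ 3) atTop
      (𝓝 (∫ x, wstarTail x * wstar x ^ 3)) := by
    refine tendsto_integral_filter_of_dominated_convergence _ (Eventually.of_forall fun t ↦ ?_)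
      (Eventually.of_forall fun t ↦ Eventually.of_forall fun x ↦ ?_)
      integrable_wstarTail_mul_wstar_pow_three
      (Eventually.of_forall fun x ↦ (tendsto_exp_mul_wstar_add x).mul_const _)
    · exact Continuous.aestronglyMeasurable (by fun_prop)
    · have := wstar_pos x
      have := wstar_pos (x + t)
      rw [norm_of_nonneg (by positivity)]
      exact mul_le_mul_of_nonneg_right (exp_mul_wstar_add_le t x) (by positivity)
  rw [integral_wstarTail_mul_wstar_pow_three] at hlim
  simpa only [← integral_const_mul, mul_assoc] using hlim
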